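/- arXiv:1901.03571 — 5 statements merged into one kernel-verified Lean document; each statement's English description precedes it below -/
import Mathlib

section
/- Inductive property of windows: Let w : ℕ → ℤ be a weight sequence. Fix positions i ≤ j such that the window starting at i closes at j, i.e., the partial sum w(i) + w(i+1) + ... + w(j-1) ≥ 0 and for all m with i < m < j, the sum w(i) + ... + w(m-1) over [i, m) is negative. Then for every position p with i ≤ p < j, the window starting at p also closes at j, i.e., the sum w(p) + ... + w(j-1) ≥ 0. -/
/-- Inductive property of windows (mean-payoff version): if the window opening at
position `i` closes at position `j` (sum over `[i,j)` nonnegative, all proper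
intermediate sums negative), then every window opening at a position `p` with
`i ≤ p < j` also closes at `j`. -/
theorem window_inductive_property (w : ℕ → ℤ) (i j : ℕ) (hij : i ≤ j)
    (hclose : 0 ≤ ∑ k ∈ Finset.Ico i j, w k)
    (hopen : ∀ m, i < m → m < j → ∑ k ∈ Finset.Ico i m, w k < 0) :
    ∀ p, i ≤ p → p < j → 0 ≤ ∑ k ∈ Finset.Ico p j, w k := by
  intro p hip hpj
  rcases eq_or_lt_of_le hip with rfl | h
  · exact hclose
  · have hsplit := Finset.sum_Ico_consecutive w hip hpj.le
    have hneg := hopen p h hpj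
    linarith [hsplit]
end

section
/- In the three-state Markov chain with states s₁, s₂, s₃ where s₁ goes to s₂ with probability 1, s₂ goes to s₂ with probability 1/2 and to s₃ with probability 1/2, and s₃ goes to s₁ with probability 1, starting from s₁, for every fixed λ ≥ 1 the probability that the run satisfies the fixed window parity objective with window size λ (priorities p(s₁)=1, p(s₂)=2, p(s₃)=0) is 0. Equivalently: almost surely, there are infinitely many visits to s₁ that are followed by at least λ consecutive steps before visiting s₃. -/
/-!
From every state the chain can reach `s₁` within two steps and then stay in `s₂`; following
this route for `λ + 2` steps has probability at least `2^-(λ+2)`, and along it the window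
opened at `s₁` stays open for `λ` steps. Cutting time into blocks of length `λ + 3`, the
Markov property gives probability at most `(1 - 2^-(λ+2))^N` to miss the route in `N`
consecutive blocks, so almost surely some window stays open after any given time.
-/

open MeasureTheory

/-- Transition matrix of the three-state Markov chain: `s₁ → s₂` w.p. 1,
`s₂ → s₂` w.p. 1/2, `s₂ → s₃` w.p. 1/2, `s₃ → s₁` w.p. 1. -/
noncomputable def P3 : Fin 3 → Fin 3 → ENNReal := ![![0, 1, 0], ![0, 1/2, 1/2], ![1, 0, 0]]

/-- Priority function: `p(s₁) = 1`, `p(s₂) = 2`, `p(s₃) = 0`. -/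
def prio3 : Fin 3 → ℕ := ![1, 2, 0]

open scoped ENNReal

section MarkovChain

variable {α : Type*}

def prefixCyl (f : ℕ → α) (n : ℕ) : Set (ℕ → α) := {ρ | ∀ i ≤ n, ρ i = f i}

noncomputable def pathWeight (P : α → α → ℝ≥0∞) (f : ℕ → α) (n : ℕ) : ℝ≥0∞ :=
  ∏ i ∈ Finset.range n, P (f i) (f (i + 1))

def IsMarkovChainLaw [MeasurableSpace α] (μ : Measure (ℕ → α)) (P : α → α → ℝ≥0∞) (s₀ : α) :
    Prop :=
  ∀ n f, f 0 = s₀ → μ (prefixCyl f n) = pathWeight P f n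

def followsAt (pat : α → ℕ → α) (m t : ℕ) : Set (ℕ → α) :=
  {ρ | ∀ k ≤ m, ρ (t + k) = pat (ρ t) k}

theorem mem_prefixCyl_self (ρ : ℕ → α) (n : ℕ) : ρ ∈ prefixCyl ρ n := fun _ _ => rfl

theorem prefixCyl_eq_of_mem {f ρ : ℕ → α} {n : ℕ} (h : ρ ∈ prefixCyl f n) :
    prefixCyl ρ n = prefixCyl f n := by
  ext σ
  exact forall₂_congr fun i hi => by rw [h i hi]

theorem prefixCyl_eq_setOf_fin (f : ℕ → α) (n : ℕ) :
    prefixCyl f n = {ρ | ∀ i : Fin (n + 1), ρ i = f i} := by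
  ext ρ
  simp [prefixCyl, Fin.forall_iff]

theorem mem_followsAt_iff_of_mem_prefixCyl {pat : α → ℕ → α} {m t : ℕ} {ρ σ : ℕ → α}
    (h : σ ∈ prefixCyl ρ (t + m)) : σ ∈ followsAt pat m t ↔ ρ ∈ followsAt pat m t := by
  refine forall₂_congr fun k hk => ?_
  rw [h (t + k) (by omega), h t (by omega)]

variable [MeasurableSpace α]

namespace IsMarkovChainLaw

variable {μ : Measure (ℕ → α)} {P : α → α → ℝ≥0∞} {s₀ : α}

theorem measure_prefixCyl_inter (hμ : IsMarkovChainLaw μ P s₀) {f g : ℕ → α} {n m : ℕ}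
    (hf : f 0 = s₀) (hg : g 0 = f n) :
    μ (prefixCyl f n ∩ {ρ | ∀ k ≤ m, ρ (n + k) = g k}) =
      μ (prefixCyl f n) * pathWeight P g m := by
  set h : ℕ → α := fun i => if i < n then f i else g (i - n)
  have hhf : ∀ i ≤ n, h i = f i := fun i hi => by
    rcases hi.lt_or_eq with hin | rfl
    · simp [h, hin]
    · simp [h, hg]
  have hhg : ∀ k, h (n + k) = g k := fun k => by simp [h]
  have hcyl : prefixCyl f n ∩ {ρ | ∀ k ≤ m, ρ (n + k) = g k} = prefixCyl h (n + m) := by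
    ext ρ
    simp only [prefixCyl, Set.mem_inter_iff, Set.mem_ofPred_eq]
    constructor
    · rintro ⟨hρf, hρg⟩ i hi
      rcases le_or_gt i n with hin | hin
      · rw [hhf i hin, hρf i hin]
      · obtain ⟨k, rfl⟩ := Nat.exists_eq_add_of_le hin.le
        rw [hhg, hρg k (by omega)]
    · intro hρ
      exact ⟨fun i hi => by rw [hρ i (by omega), hhf i hi],
        fun k hk => by rw [hρ _ (by omega), hhg]⟩
  have hweight : pathWeight P h (n + m) = pathWeight P f n * pathWeight P g m := by
    rw [pathWeight, Finset.prod_range_add]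
    congr 1
    · exact Finset.prod_congr rfl fun i hi => by
        rw [hhf i (Finset.mem_range.1 hi).le, hhf (i + 1) (Finset.mem_range.1 hi)]
    · simp only [add_assoc, hhg, pathWeight]
  rw [hcyl, hμ _ _ (by rw [hhf 0 n.zero_le, hf]), hweight, hμ _ _ hf]

end IsMarkovChainLaw

variable [MeasurableSingletonClass α]

theorem measurableSet_prefixCyl (f : ℕ → α) (n : ℕ) : MeasurableSet (prefixCyl f n) := by
  rw [prefixCyl_eq_setOf_fin, Set.ofPred_forall]
  exact MeasurableSet.iInter fun i => measurable_pi_apply _ (measurableSet_singleton _)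

theorem measurableSet_followsAt [Countable α] (pat : α → ℕ → α) (m t : ℕ) :
    MeasurableSet (followsAt pat m t) := by
  simp only [followsAt, Set.ofPred_forall]
  exact MeasurableSet.iInter fun k => MeasurableSet.iInter fun _ =>
    measurableSet_eq_fun (measurable_pi_apply _)
      ((measurable_of_countable fun a => pat a k).comp (measurable_pi_apply t))

/-- `D` is a countable disjoint union of prefix cylinders of length `n`. -/
theorem measure_inter_le_of_forall_prefixCyl [Countable α] {μ : Measure (ℕ → α)}
    {D T : Set (ℕ → α)} {n : ℕ} {c : ℝ≥0∞} (hD : ∀ ρ ∈ D, prefixCyl ρ n ⊆ D)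
    (h : ∀ f, μ (prefixCyl f n ∩ T) ≤ c * μ (prefixCyl f n)) : μ (D ∩ T) ≤ c * μ D := by
  set 𝒞 := (prefixCyl · n) '' D
  have h𝒞 : 𝒞.Countable := by
    refine (Set.countable_range fun w : Fin (n + 1) → α => {ρ | ∀ i, ρ i = w i}).mono ?_
    rintro _ ⟨ρ, -, rfl⟩
    exact ⟨fun i => ρ i, (prefixCyl_eq_setOf_fin ρ n).symm⟩
  have hD𝒞 : D = ⋃₀ 𝒞 := by
    refine subset_antisymm (fun ρ hρ => ⟨_, Set.mem_image_of_mem _ hρ, mem_prefixCyl_self ρ n⟩) ?_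
    rintro σ ⟨_, ⟨ρ, hρ, rfl⟩, hσ⟩
    exact hD ρ hρ hσ
  have hdisj : 𝒞.Pairwise Disjoint := by
    rintro _ ⟨ρ, -, rfl⟩ _ ⟨ρ', -, rfl⟩ hne
    exact Set.disjoint_left.2 fun σ hσ hσ' =>
      hne ((prefixCyl_eq_of_mem hσ).symm.trans (prefixCyl_eq_of_mem hσ'))
  calc μ (D ∩ T) = μ (⋃ C ∈ 𝒞, C ∩ T) := by rw [hD𝒞, Set.sUnion_eq_biUnion, Set.iUnion₂_inter]
    _ ≤ ∑' C : 𝒞, μ (C ∩ T) := measure_biUnion_le μ h𝒞 _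
    _ ≤ ∑' C : 𝒞, c * μ C := ENNReal.tsum_le_tsum fun ⟨_, ρ, _, hC⟩ => hC ▸ h ρ
    _ = c * μ D := by
      rw [ENNReal.tsum_mul_left, hD𝒞, measure_sUnion h𝒞 hdisj]
      rintro _ ⟨ρ, -, rfl⟩
      exact measurableSet_prefixCyl ρ n

namespace IsMarkovChainLaw

variable {μ : Measure (ℕ → α)} {P : α → α → ℝ≥0∞} {s₀ : α}

theorem measure_prefixCyl_of_ne [IsProbabilityMeasure μ] (hμ : IsMarkovChainLaw μ P s₀)
    {f : ℕ → α} (hf : f 0 ≠ s₀) (n : ℕ) : μ (prefixCyl f n) = 0 := by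
  have hstart : μ (prefixCyl (fun _ => s₀) 0) = 1 := by
    simp [hμ 0 (fun _ => s₀) rfl, pathWeight]
  have hsub : prefixCyl f n ⊆ (prefixCyl (fun _ => s₀) 0)ᶜ := fun ρ hρ hρ₀ =>
    hf (by rw [← hρ 0 n.zero_le, hρ₀ 0 le_rfl])
  exact measure_mono_null hsub ((prob_compl_eq_zero_iff (measurableSet_prefixCyl _ 0)).2 hstart)

theorem measure_prefixCyl_diff_followsAt_le [IsProbabilityMeasure μ] [Countable α]
    (hμ : IsMarkovChainLaw μ P s₀) {pat : α → ℕ → α} (hpat : ∀ s, pat s 0 = s) {m : ℕ}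
    {δ : ℝ≥0∞} (hδ : ∀ s, δ ≤ pathWeight P (pat s) m) (f : ℕ → α) (n : ℕ) :
    μ (prefixCyl f n \ followsAt pat m n) ≤ (1 - δ) * μ (prefixCyl f n) := by
  by_cases hf : f 0 = s₀
  swap
  · rw [hμ.measure_prefixCyl_of_ne hf n, mul_zero]
    exact (measure_mono_null Set.sdiff_subset (hμ.measure_prefixCyl_of_ne hf n)).le
  have hinter : prefixCyl f n ∩ followsAt pat m n =
      prefixCyl f n ∩ {ρ | ∀ k ≤ m, ρ (n + k) = pat (f n) k} := by
    ext ρ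
    refine and_congr_right fun hρ => ?_
    rw [followsAt, Set.mem_ofPred_eq, hρ n le_rfl]
    rfl
  have hsplit := measure_inter_add_sdiff (μ := μ) (prefixCyl f n) (measurableSet_followsAt pat m n)
  rw [hinter, hμ.measure_prefixCyl_inter hf (hpat _)] at hsplit
  calc μ (prefixCyl f n \ followsAt pat m n)
      = μ (prefixCyl f n) - μ (prefixCyl f n) * pathWeight P (pat (f n)) m :=
        ENNReal.eq_sub_of_add_eq' (measure_ne_top μ _) (by rwa [add_comm])
    _ ≤ μ (prefixCyl f n) - μ (prefixCyl f n) * δ := by gcongr; exact hδ _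
    _ = (1 - δ) * μ (prefixCyl f n) := by
        rw [ENNReal.sub_mul (fun _ _ => measure_ne_top μ _), one_mul, mul_comm]

theorem measure_forall_lt_not_followsAt_le [IsProbabilityMeasure μ] [Countable α]
    (hμ : IsMarkovChainLaw μ P s₀) {pat : α → ℕ → α} (hpat : ∀ s, pat s 0 = s) {m : ℕ}
    {δ : ℝ≥0∞} (hδ : ∀ s, δ ≤ pathWeight P (pat s) m) (i N : ℕ) :
    μ {ρ | ∀ k < N, ρ ∉ followsAt pat m (i + k * (m + 1))} ≤ (1 - δ) ^ N := by
  induction N with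
  | zero => simp
  | succ N ih =>
    set D := {ρ | ∀ k < N, ρ ∉ followsAt pat m (i + k * (m + 1))}
    have hD : ∀ ρ ∈ D, prefixCyl ρ (i + N * (m + 1)) ⊆ D := fun ρ hρ σ hσ k hk hσk =>
      hρ k hk ((mem_followsAt_iff_of_mem_prefixCyl fun j hj => hσ j (by nlinarith)).1 hσk)
    have hsucc : {ρ | ∀ k < N + 1, ρ ∉ followsAt pat m (i + k * (m + 1))} =
        D ∩ (followsAt pat m (i + N * (m + 1)))ᶜ := by
      ext ρ
      simp only [D, Set.mem_inter_iff, Set.mem_compl_iff, Set.mem_ofPred_eq,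
        Nat.lt_add_one_iff_lt_or_eq, or_imp, forall_and, forall_eq]
    rw [hsucc, pow_succ']
    calc μ (D ∩ (followsAt pat m (i + N * (m + 1)))ᶜ) ≤ (1 - δ) * μ D :=
          measure_inter_le_of_forall_prefixCyl hD
            (hμ.measure_prefixCyl_diff_followsAt_le hpat hδ · _)
      _ ≤ (1 - δ) * (1 - δ) ^ N := by gcongr

theorem measure_forall_ge_not_followsAt [IsProbabilityMeasure μ] [Countable α]
    (hμ : IsMarkovChainLaw μ P s₀) {pat : α → ℕ → α} (hpat : ∀ s, pat s 0 = s) {m : ℕ}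
    {δ : ℝ≥0∞} (hδ : ∀ s, δ ≤ pathWeight P (pat s) m) (hδ₀ : δ ≠ 0) (i : ℕ) :
    μ {ρ | ∀ t ≥ i, ρ ∉ followsAt pat m t} = 0 := by
  have hlt : 1 - δ < 1 := ENNReal.sub_lt_self ENNReal.one_ne_top one_ne_zero hδ₀
  refine le_antisymm (ge_of_tendsto' (ENNReal.tendsto_pow_atTop_nhds_zero_of_lt_one hlt)
    fun N => ?_) zero_le
  have hsub : {ρ | ∀ t ≥ i, ρ ∉ followsAt pat m t} ⊆
      {ρ | ∀ k < N, ρ ∉ followsAt pat m (i + k * (m + 1))} :=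
    fun ρ hρ k _ => hρ _ (Nat.le_add_right _ _)
  exact (measure_mono hsub).trans (hμ.measure_forall_lt_not_followsAt_le hpat hδ i N)

end IsMarkovChainLaw

end MarkovChain

/-- The shortest route from `s` to `s₁`, followed by `s₂` forever. -/
def stallPath (s : Fin 3) (k : ℕ) : Fin 3 := (![[0], [1, 2, 0], [2, 0]] s).getD k 1

theorem stallPath_zero (s : Fin 3) : stallPath s 0 = s := by
  fin_cases s <;> rfl

theorem exists_stallPath_eq_zero (s : Fin 3) :
    ∃ d ≤ 2, stallPath s d = 0 ∧ ∀ l, 0 < l → stallPath s (d + l) = 1 := by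
  fin_cases s
  · exact ⟨0, by omega, rfl, fun l hl => List.getD_eq_default _ _ (by simp; omega)⟩
  · exact ⟨2, le_rfl, rfl, fun l hl => List.getD_eq_default _ _ (by simp; omega)⟩
  · exact ⟨1, by omega, rfl, fun l hl => List.getD_eq_default _ _ (by simp; omega)⟩

theorem inv_two_le_P3_stallPath (s : Fin 3) (k : ℕ) :
    2⁻¹ ≤ P3 (stallPath s k) (stallPath s (k + 1)) := by
  fin_cases s <;> rcases k with _ | _ | _ | k <;> simp [stallPath, P3]

theorem inv_two_pow_le_pathWeight_stallPath (s : Fin 3) (m : ℕ) :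
    2⁻¹ ^ m ≤ pathWeight P3 (stallPath s) m := by
  simpa [pathWeight] using Finset.pow_card_le_prod (Finset.range m) _ _ fun k _ =>
    inv_two_le_P3_stallPath s k

def windowCloses (lam : ℕ) (ρ : ℕ → Fin 3) (j : ℕ) : Prop :=
  ∃ l, l < lam ∧ Even (prio3 (ρ (j + l))) ∧ ∀ k, k ≤ l → prio3 (ρ (j + l)) ≤ prio3 (ρ (j + k))

theorem not_windowCloses {lam j : ℕ} {ρ : ℕ → Fin 3} (h0 : ρ j = 0)
    (h1 : ∀ l, 0 < l → l < lam → ρ (j + l) = 1) : ¬ windowCloses lam ρ j := by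
  rintro ⟨l, hl, heven, hmin⟩
  rcases l.eq_zero_or_pos with rfl | hpos
  · simp [h0, prio3] at heven
  · simpa [h1 l hpos hl, h0, prio3] using hmin 0 l.zero_le

theorem exists_not_windowCloses_of_mem_followsAt {lam t : ℕ} {ρ : ℕ → Fin 3}
    (h : ρ ∈ followsAt stallPath (lam + 2) t) : ∃ j ≥ t, ¬ windowCloses lam ρ j := by
  obtain ⟨d, hd, hzero, hone⟩ := exists_stallPath_eq_zero (ρ t)
  refine ⟨t + d, Nat.le_add_right _ _, not_windowCloses (by rw [h d (by omega), hzero])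
    fun l hl hlam => ?_⟩
  rw [add_assoc, h (d + l) (by omega), hone l hl]

theorem fw_parity_prob_zero_general (μ : Measure (ℕ → Fin 3)) [IsProbabilityMeasure μ]
    (hμ : ∀ (n : ℕ) (f : ℕ → Fin 3), f 0 = 0 →
      μ {ρ | ∀ i ≤ n, ρ i = f i} = ∏ i ∈ Finset.range n, P3 (f i) (f (i + 1)))
    (lam : ℕ) :
    μ {ρ | ∃ i, ∀ j, i ≤ j → ∃ l, l < lam ∧ Even (prio3 (ρ (j + l))) ∧
        ∀ k, k ≤ l → prio3 (ρ (j + l)) ≤ prio3 (ρ (j + k))} = 0 := by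
  have hchain : IsMarkovChainLaw μ P3 0 := hμ
  rw [Set.ofPred_exists]
  refine measure_iUnion_null fun i => measure_mono_null ?_
    (hchain.measure_forall_ge_not_followsAt stallPath_zero
      (inv_two_pow_le_pathWeight_stallPath · (lam + 2)) (by simp) i)
  intro ρ hρ t ht hfollow
  obtain ⟨j, hj, hopen⟩ := exists_not_windowCloses_of_mem_followsAt hfollow
  exact hopen (hρ j (ht.trans hj))

/-- In the three-state Markov chain started at `s₁`, for every window size
`λ ≥ 1` the fixed window parity objective `FW(λ)` has probability 0. -/
theorem fw_parity_prob_zero (μ : Measure (ℕ → Fin 3)) [IsProbabilityMeasure μ]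
    (hμ : ∀ (n : ℕ) (f : ℕ → Fin 3), f 0 = 0 →
      μ {ρ | ∀ i ≤ n, ρ i = f i} = ∏ i ∈ Finset.range n, P3 (f i) (f (i + 1)))
    (lam : ℕ) (hlam : 1 ≤ lam) :
    μ {ρ | ∃ i, ∀ j, i ≤ j → ∃ l, l < lam ∧ Even (prio3 (ρ (j + l))) ∧
        ∀ k, k ≤ l → prio3 (ρ (j + l)) ≤ prio3 (ρ (j + k))} = 0 :=
  fw_parity_prob_zero_general μ hμ lam
end

section
/- Good-window decomposition of direct fixed window runs: An infinite weight sequence w : ℕ → ℤ satisfies the direct fixed window mean-payoff objective DFW_mp(λ) (every position j has some l < λ with Σ_{k=j}^{j+l} w(k) ≥ 0) if and only if there exists an infinite increasing sequence of positions 0 = j₀ < j₁ < j₂ < ... with j_{i+1} - j_i ≤ λ such that for every i, the sum Σ_{k=j_i}^{j_{i+1}-1} w(k) ≥ 0 and all intermediate partial sums from j_i are handled by the inductive property, i.e., every window inside [j_i, j_{i+1}] closes by j_{i+1}. -/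
/-!
Cut the run greedily: from a cut point `j`, the next cut is the *first* position `m > j` at
which the window opened at `j` closes, i.e. `∑_{k ∈ [j, m)} w k ≥ 0`. By `DFW_mp(λ)` this happens
within `λ` steps, and minimality makes every window opened inside `[j, m)` close by `m` as well:
a suffix `[p, m)` is the difference of the nonnegative sum over `[j, m)` and the negative one over
`[j, p)`. Conversely, in such a decomposition every position `p` lies in a block `[j i, j (i+1))`,
and the window opened at `p` closes by `j (i+1) ≤ p + λ`.
-/

/-- The direct fixed window mean-payoff objective for a weight sequence `w`:
every position admits a good window of size at most `lam`. -/
def DFWmp (lam : ℕ) (w : ℕ → ℤ) : Prop :=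
  ∀ j, ∃ l, l < lam ∧ 0 ≤ ∑ k ∈ Finset.Icc j (j + l), w k

open Finset

section ClosingWindow

variable {G : Type*} [AddCommGroup G] [LinearOrder G] [IsOrderedAddMonoid G] (w : ℕ → G)

theorem sum_Ico_nonneg_of_first_closing {j m : ℕ} (hclose : 0 ≤ ∑ k ∈ Ico j m, w k)
    (hfirst : ∀ m', j < m' → m' < m → ∑ k ∈ Ico j m', w k < 0)
    {p : ℕ} (hjp : j ≤ p) (hpm : p < m) : 0 ≤ ∑ k ∈ Ico p m, w k := by
  rcases hjp.eq_or_lt with rfl | hjp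
  · exact hclose
  · by_contra! hneg
    rw [← sum_Ico_consecutive w hjp.le hpm.le] at hclose
    exact (add_neg (hfirst p hjp hpm) hneg).not_ge hclose

theorem exists_le_forall_sum_Ico_suffix_nonneg {j m₀ : ℕ} (hjm₀ : j < m₀) (hm₀ : 0 ≤ ∑ k ∈ Ico j m₀, w k) :
    ∃ m, j < m ∧ m ≤ m₀ ∧ ∀ p, j ≤ p → p < m → 0 ≤ ∑ k ∈ Ico p m, w k := by
  classical
  have hex : ∃ m, j < m ∧ 0 ≤ ∑ k ∈ Ico j m, w k := ⟨m₀, hjm₀, hm₀⟩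
  obtain ⟨hjm, hclose⟩ := Nat.find_spec hex
  refine ⟨Nat.find hex, hjm, Nat.find_min' hex ⟨hjm₀, hm₀⟩, fun p => ?_⟩
  refine sum_Ico_nonneg_of_first_closing w hclose fun m' hjm' hm' => ?_
  exact not_le.mp fun h => Nat.find_min hex hm' ⟨hjm', h⟩

end ClosingWindow

theorem StrictMono.exists_le_lt_apply_succ {f : ℕ → ℕ} (hf : StrictMono f) {p : ℕ}
    (hp : f 0 ≤ p) : ∃ i, f i ≤ p ∧ p < f (i + 1) := by
  classical
  have hex : ∃ i, p < f (i + 1) := ⟨p, p.lt_succ_self.trans_le hf.le_apply⟩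
  refine ⟨Nat.find hex, ?_, Nat.find_spec hex⟩
  cases hi : Nat.find hex with
  | zero => exact hp
  | succ i => exact not_lt.mp (Nat.find_min hex (hi ▸ i.lt_succ_self))

theorem dfwMp_iff_forall_exists_Ico (lam : ℕ) (w : ℕ → ℤ) :
    DFWmp lam w ↔ ∀ j, ∃ m, j < m ∧ m ≤ j + lam ∧ 0 ≤ ∑ k ∈ Ico j m, w k := by
  refine forall_congr' fun j => ⟨fun ⟨l, hl, h⟩ => ?_, fun ⟨m, hjm, hm, h⟩ => ?_⟩
  · exact ⟨j + l + 1, by omega, by omega, by rwa [Ico_add_one_right_eq_Icc]⟩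
  · refine ⟨m - j - 1, by omega, ?_⟩
    rwa [← Ico_add_one_right_eq_Icc, show j + (m - j - 1) + 1 = m by omega]

theorem dfw_good_window_decomposition_general (w : ℕ → ℤ) (lam : ℕ) :
    DFWmp lam w ↔ ∃ j : ℕ → ℕ, j 0 = 0 ∧ StrictMono j ∧
      (∀ i, j (i + 1) - j i ≤ lam) ∧
      (∀ i, 0 ≤ ∑ k ∈ Finset.Ico (j i) (j (i + 1)), w k) ∧
      (∀ i p, j i ≤ p → p < j (i + 1) → 0 ≤ ∑ k ∈ Finset.Ico p (j (i + 1)), w k) := by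
  rw [dfwMp_iff_forall_exists_Ico]
  constructor
  · intro h
    have hnext : ∀ j, ∃ m, j < m ∧ m ≤ j + lam ∧
        ∀ p, j ≤ p → p < m → 0 ≤ ∑ k ∈ Ico p m, w k := fun j =>
      let ⟨_, hjm₀, hm₀, hsum⟩ := h j
      let ⟨m, hjm, hmm₀, hm⟩ := exists_le_forall_sum_Ico_suffix_nonneg w hjm₀ hsum
      ⟨m, hjm, hmm₀.trans hm₀, hm⟩
    choose F hlt hle hsuffix using hnext
    have hsucc (i : ℕ) : F^[i + 1] 0 = F (F^[i] 0) := Function.iterate_succ_apply' F i 0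
    refine ⟨fun i => F^[i] 0, rfl, strictMono_nat_of_lt_succ fun i => ?_, fun i => ?_,
      fun i => ?_, fun i p => ?_⟩ <;> simp only [hsucc]
    · exact hlt _
    · have := hle (F^[i] 0)
      omega
    · exact hsuffix _ _ le_rfl (hlt _)
    · exact hsuffix _ p
  · rintro ⟨j, hj0, hj, hgap, -, hsuffix⟩ p
    obtain ⟨i, hip, hpi⟩ := hj.exists_le_lt_apply_succ (hj0 ▸ p.zero_le)
    have := hgap i
    exact ⟨j (i + 1), hpi, by omega, hsuffix i p hip hpi⟩

/-- Good-window decomposition: `w` satisfies `DFW_mp(λ)` iff there is an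
infinite increasing sequence of positions `0 = j₀ < j₁ < ...`, with gaps at
most `λ`, nonnegative block sums, such that every window inside a block closes
by the end of the block. -/
theorem dfw_good_window_decomposition (w : ℕ → ℤ) (lam : ℕ) (hlam : 1 ≤ lam) :
    DFWmp lam w ↔ ∃ j : ℕ → ℕ, j 0 = 0 ∧ StrictMono j ∧
      (∀ i, j (i + 1) - j i ≤ lam) ∧
      (∀ i, 0 ≤ ∑ k ∈ Finset.Ico (j i) (j (i + 1)), w k) ∧
      (∀ i p, j i ≤ p → p < j (i + 1) → 0 ≤ ∑ k ∈ Finset.Ico p (j (i + 1)), w k) :=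
  dfw_good_window_decomposition_general w lam
end

section
/- Reduction correctness for the safety unfolding (mean-payoff): for any infinite weight sequence w : ℕ → ℤ with |w(k)| ≤ W, define the 'tracker' sequence (l_n, z_n) by (l_0, z_0) = (0,0) and (l_{n+1}, z_{n+1}) = (0,0) if z_n + w(n) ≥ 0 or (l_n = λ and z_n < 0), and (l_n + 1, z_n + w(n)) otherwise. Then w satisfies DFW_mp(λ) if and only if the tracker never reaches a state with l = λ and z < 0. -/
/-!
The tracker state `(l n, z n)` records the window opened at `n - l n`: it is still open at `n`
(every nonempty prefix of it has negative sum) and `z n` is its running sum. A window open up to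
`j` has nonpositive sum up to `j`, so a window opened at `j` that stays open `λ` steps keeps the
tracked window, opened at or before `j`, open as well; the tracker then reaches age `λ`.
Conversely, the tracker at age `λ` exhibits a window that stayed open `λ` steps.
-/

open Finset

variable {G : Type*} [AddCommMonoid G] [LinearOrder G]

def WindowOpen (w : ℕ → G) (s n : ℕ) : Prop :=
  ∀ m, s < m → m ≤ n → ∑ k ∈ Ico s m, w k < 0

namespace WindowOpen

variable {w : ℕ → G} {s j n : ℕ}

theorem self (w : ℕ → G) (n : ℕ) : WindowOpen w n n :=
  fun _ hnm hmn => absurd hmn (not_le.2 hnm)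

theorem mono (h : WindowOpen w s n) (hjn : j ≤ n) : WindowOpen w s j :=
  fun m hsm hmj => h m hsm (hmj.trans hjn)

theorem succ (h : WindowOpen w s n) (hneg : ∑ k ∈ Ico s (n + 1), w k < 0) :
    WindowOpen w s (n + 1) := by
  intro m hsm hmn
  rcases Nat.lt_or_eq_of_le hmn with hmn | rfl
  · exact h m hsm (Nat.lt_succ_iff.1 hmn)
  · exact hneg

theorem sum_nonpos (h : WindowOpen w s n) (hsn : s ≤ n) : ∑ k ∈ Ico s n, w k ≤ 0 := by
  rcases hsn.eq_or_lt with rfl | hsn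
  · simp
  · exact (h n hsn le_rfl).le

/-- The inductive property of windows. -/
theorem sum_Ico_neg [IsOrderedCancelAddMonoid G] {m : ℕ} (h : WindowOpen w s j) (hsj : s ≤ j)
    (hjm : j ≤ m) (hneg : ∑ k ∈ Ico j m, w k < 0) : ∑ k ∈ Ico s m, w k < 0 := by
  rw [← sum_Ico_consecutive w hsj hjm]
  exact add_neg_of_nonpos_of_neg (h.sum_nonpos hsj) hneg

end WindowOpen

theorem windowOpen_add_iff {w : ℕ → G} {j lam : ℕ} :
    WindowOpen w j (j + lam) ↔ ∀ t < lam, ∑ k ∈ Icc j (j + t), w k < 0 := by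
  constructor
  · intro h t ht
    rw [← Ico_add_one_right_eq_Icc]
    exact h _ (by omega) (by omega)
  · intro h m hjm hm
    obtain ⟨t, rfl⟩ : ∃ t, m = j + t + 1 := ⟨m - j - 1, by omega⟩
    rw [Ico_add_one_right_eq_Icc]
    exact h t (by omega)

structure IsTracker (w : ℕ → G) (lam : ℕ) (l : ℕ → ℕ) (z : ℕ → G) : Prop where
  init : l 0 = 0 ∧ z 0 = 0
  reset : ∀ n, (0 ≤ z n + w n ∨ (l n = lam ∧ z n < 0)) → l (n + 1) = 0 ∧ z (n + 1) = 0
  step : ∀ n, ¬(0 ≤ z n + w n ∨ (l n = lam ∧ z n < 0)) →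
    l (n + 1) = l n + 1 ∧ z (n + 1) = z n + w n

namespace IsTracker

variable {w : ℕ → G} {lam : ℕ} {l : ℕ → ℕ} {z : ℕ → G}

theorem invariant (ht : IsTracker w lam l z) (n : ℕ) :
    l n ≤ n ∧ z n = ∑ k ∈ Ico (n - l n) n, w k ∧ WindowOpen w (n - l n) n := by
  induction n with
  | zero =>
    obtain ⟨hl, hz⟩ := ht.init
    simp [hl, hz, WindowOpen.self]
  | succ n ih =>
    obtain ⟨hln, hz, hopen⟩ := ih
    by_cases hc : 0 ≤ z n + w n ∨ (l n = lam ∧ z n < 0)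
    · obtain ⟨hl', hz'⟩ := ht.reset n hc
      simp [hl', hz', WindowOpen.self]
    · obtain ⟨hl', hz'⟩ := ht.step n hc
      have hstart : n + 1 - l (n + 1) = n - l n := by omega
      have hsum : z (n + 1) = ∑ k ∈ Ico (n - l n) (n + 1), w k := by
        rw [hz', hz, sum_Ico_succ_top (Nat.sub_le n (l n))]
      have hneg : z (n + 1) < 0 := hz' ▸ lt_of_not_ge fun h => hc (Or.inl h)
      refine ⟨by omega, hstart ▸ hsum, hstart ▸ hopen.succ (hsum ▸ hneg)⟩

theorem neg_of_pos (ht : IsTracker w lam l z) {n : ℕ} (hn : 0 < l n) : z n < 0 := by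
  obtain ⟨hln, hz, hopen⟩ := ht.invariant n
  exact hz ▸ hopen n (by omega) le_rfl

theorem le_lam (ht : IsTracker w lam l z) (hlam : 1 ≤ lam) (n : ℕ) : l n ≤ lam := by
  induction n with
  | zero => simp [ht.init.1]
  | succ n ih =>
    by_cases hc : 0 ≤ z n + w n ∨ (l n = lam ∧ z n < 0)
    · simp [(ht.reset n hc).1]
    · have hne : l n ≠ lam := fun h => hc (Or.inr ⟨h, ht.neg_of_pos (by omega)⟩)
      rw [(ht.step n hc).1]
      omega

theorem le_of_windowOpen [IsOrderedCancelAddMonoid G] (ht : IsTracker w lam l z)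
    (hsafe : ∀ n, ¬(l n = lam ∧ z n < 0)) {j i : ℕ} (hopen : WindowOpen w j (j + i)) :
    i ≤ l (j + i) := by
  induction i with
  | zero => exact Nat.zero_le _
  | succ i ih =>
    have hi := ih (hopen.mono (by omega))
    obtain ⟨hln, hz, htracked⟩ := ht.invariant (j + i)
    have hneg : z (j + i) + w (j + i) < 0 := by
      rw [hz, ← sum_Ico_succ_top (by omega)]
      exact (htracked.mono (by omega)).sum_Ico_neg (by omega) (by omega)
        (hopen (j + i + 1) (by omega) (by omega))
    have hc : ¬(0 ≤ z (j + i) + w (j + i) ∨ (l (j + i) = lam ∧ z (j + i) < 0)) :=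
      fun h => h.elim (fun h => not_le.2 hneg h) (hsafe _)
    rw [← add_assoc, (ht.step _ hc).1]
    omega

end IsTracker

theorem tracker_mp_correct_general (w : ℕ → ℤ)
    (lam : ℕ) (hlam : 1 ≤ lam)
    (l : ℕ → ℕ) (z : ℕ → ℤ) (h0 : l 0 = 0 ∧ z 0 = 0)
    (hreset : ∀ n, (0 ≤ z n + w n ∨ (l n = lam ∧ z n < 0)) →
      l (n + 1) = 0 ∧ z (n + 1) = 0)
    (hstep : ∀ n, ¬(0 ≤ z n + w n ∨ (l n = lam ∧ z n < 0)) →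
      l (n + 1) = l n + 1 ∧ z (n + 1) = z n + w n) :
    (∀ j, ∃ t, t < lam ∧ 0 ≤ ∑ k ∈ Finset.Icc j (j + t), w k) ↔
      ∀ n, ¬(l n = lam ∧ z n < 0) := by
  have ht : IsTracker w lam l z := ⟨h0, hreset, hstep⟩
  have hdfw : (∀ j, ∃ t, t < lam ∧ 0 ≤ ∑ k ∈ Icc j (j + t), w k) ↔
      ∀ j, ¬WindowOpen w j (j + lam) := by
    simp only [windowOpen_add_iff, not_forall, not_lt, exists_prop]
  rw [hdfw]
  constructor
  · rintro hclosed n ⟨hl, -⟩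
    obtain ⟨hln, -, hopen⟩ := ht.invariant n
    exact hclosed (n - lam) (by rwa [Nat.sub_add_cancel (hl ▸ hln), ← hl])
  · intro hsafe j hopen
    have hl : l (j + lam) = lam :=
      le_antisymm (ht.le_lam hlam _) (ht.le_of_windowOpen hsafe hopen)
    exact hsafe _ ⟨hl, ht.neg_of_pos (by omega)⟩

/-- Correctness of the safety unfolding for direct fixed window mean-payoff:
the tracker `(l, z)` (window age and running sum, reset upon closure or upon
staying open `λ` steps) never reaches a state with `l = λ` and `z < 0` iff the
weight sequence satisfies `DFW_mp(λ)`. -/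
theorem tracker_mp_correct (w : ℕ → ℤ) (W : ℕ) (hW : ∀ k, |w k| ≤ (W : ℤ))
    (lam : ℕ) (hlam : 1 ≤ lam)
    (l : ℕ → ℕ) (z : ℕ → ℤ) (h0 : l 0 = 0 ∧ z 0 = 0)
    (hreset : ∀ n, (0 ≤ z n + w n ∨ (l n = lam ∧ z n < 0)) →
      l (n + 1) = 0 ∧ z (n + 1) = 0)
    (hstep : ∀ n, ¬(0 ≤ z n + w n ∨ (l n = lam ∧ z n < 0)) →
      l (n + 1) = l n + 1 ∧ z (n + 1) = z n + w n) :
    (∀ j, ∃ t, t < lam ∧ 0 ≤ ∑ k ∈ Finset.Icc j (j + t), w k) ↔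
      ∀ n, ¬(l n = lam ∧ z n < 0) :=
  tracker_mp_correct_general w lam hlam l z h0 hreset hstep
end

section
/- Reduction correctness for the safety unfolding (parity): for any infinite priority sequence p : ℕ → {0,...,d}, define the tracker (l_n, c_n) by (l_0, c_0) = (0, p(0)); if c_n is even then (l_{n+1}, c_{n+1}) = (0, p(n+1)); if c_n is odd and l_n < λ - 1 then (l_{n+1}, c_{n+1}) = (l_n + 1, min(c_n, p(n+1))); if c_n is odd and l_n = λ - 1 the tracker is declared 'bad'. Then p satisfies DFW_par(λ) (every position j has some l < λ with p(j+l) even and p(j+l) < p(k) for all j ≤ k < j+l) if and only if the tracker is never bad. -/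
/-- Correctness of the safety unfolding for direct fixed window parity: the
tracker `(l, c)` (age of the oldest open window and its minimal priority,
reset when the minimum becomes even) is never bad (odd minimum of age `λ - 1`)
iff the priority sequence satisfies `DFW_par(λ)`. -/
theorem tracker_par_correct (p : ℕ → ℕ) (d : ℕ) (hd : ∀ n, p n ≤ d)
    (lam : ℕ) (hlam : 1 ≤ lam)
    (l c : ℕ → ℕ) (h0 : l 0 = 0 ∧ c 0 = p 0)
    (heven : ∀ n, Even (c n) → l (n + 1) = 0 ∧ c (n + 1) = p (n + 1))
    (hodd : ∀ n, Odd (c n) → l n < lam - 1 →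
      l (n + 1) = l n + 1 ∧ c (n + 1) = min (c n) (p (n + 1))) :
    (∀ j, ∃ t, t < lam ∧ Even (p (j + t)) ∧ ∀ k, j ≤ k → k ≤ j + t → p (j + t) ≤ p k) ↔
      ∀ n, ¬(Odd (c n) ∧ l n = lam - 1) := by
  obtain ⟨hl0, hc0⟩ := h0
  have inv : ∀ n, (∀ m, m < n → ¬(Odd (c m) ∧ l m = lam - 1)) →
      (l n ≤ n ∧ l n ≤ lam - 1) ∧
      (∃ k, k ≤ n ∧ n ≤ k + l n ∧ c n = p k) ∧
      (∀ k, k ≤ n → n ≤ k + l n → c n ≤ p k) ∧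
      (∀ m, m < n → n ≤ m + l n → Odd (c m) ∧ l n = l m + (n - m)) ∧
      (Even (c n) → c n = p n) := by
    intro n
    induction n with
    | zero =>
      intro _
      refine ⟨⟨by omega, by omega⟩, ⟨0, le_rfl, by omega, by rw [hc0]⟩, ?_, ?_, ?_⟩
      · intro k hk _
        have : k = 0 := by omega
        subst this
        exact hc0.le
      · intro m hm _; omega
      · intro _; exact hc0
    | succ n ih =>
      intro hgood
      have hgoodn : ∀ m, m < n → ¬(Odd (c m) ∧ l m = lam - 1) :=
        fun m hm => hgood m (by omega)
      obtain ⟨⟨h1a, h1b⟩, ⟨k0, hk0, hnk0, hck0⟩, h3, h4, h5⟩ := ih hgoodn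
      rcases Nat.even_or_odd (c n) with hc | hc
      · obtain ⟨hle, hce⟩ := heven n hc
        refine ⟨⟨by omega, by omega⟩, ⟨n+1, le_rfl, by omega, by rw [hce]⟩, ?_, ?_, ?_⟩
        · intro k hk1 hk2
          have : k = n + 1 := by omega
          subst this
          exact (hce).le
        · intro m hm1 hm2; omega
        · intro _; exact hce
      · have hnb : l n < lam - 1 := by
          have := hgood n (by omega)
          rcases Nat.lt_or_ge (l n) (lam - 1) with h | h
          · exact h
          · exact absurd ⟨hc, by omega⟩ this
        obtain ⟨hls, hcs⟩ := hodd n hc hnb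
        refine ⟨⟨by omega, by omega⟩, ?_, ?_, ?_, ?_⟩
        · rcases le_total (c n) (p (n+1)) with hmin | hmin
          · exact ⟨k0, by omega, by omega, by rw [hcs, min_eq_left hmin]; exact hck0⟩
          · exact ⟨n+1, le_rfl, by omega, by rw [hcs, min_eq_right hmin]⟩
        · intro k hk1 hk2
          rcases Nat.lt_or_ge k (n+1) with hk | hk
          · have hle' : c (n+1) ≤ c n := by rw [hcs]; exact min_le_left _ _
            exact le_trans hle' (h3 k (by omega) (by omega))
          · have : k = n + 1 := by omega
            subst this
            rw [hcs]; exact min_le_right _ _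
        · intro m hm1 hm2
          rcases Nat.lt_or_ge m n with hm | hm
          · obtain ⟨ho, hl⟩ := h4 m hm (by omega)
            exact ⟨ho, by omega⟩
          · have : m = n := by omega
            subst this
            exact ⟨hc, by omega⟩
        · intro hev
          rcases le_total (c n) (p (n+1)) with hmin | hmin
          · rw [hcs, min_eq_left hmin] at hev
            rw [Nat.even_iff] at hev; rw [Nat.odd_iff] at hc; omega
          · rw [hcs, min_eq_right hmin]
  constructor
  · -- DFW → never bad
    intro h n
    induction n using Nat.strong_induction_on with
    | _ n ihn =>
      rintro ⟨hoddn, hln⟩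
      have hprev : ∀ m, m < n → ¬(Odd (c m) ∧ l m = lam - 1) := ihn
      obtain ⟨⟨hln_n, _⟩, ⟨k0, hk0, hnk0, hck0⟩, h3, h4, _⟩ := inv n hprev
      set j := n - (lam - 1) with hj
      have hnj : n = j + (lam - 1) := by omega
      obtain ⟨t, ht, hev, hmin⟩ := h j
      set m := j + t with hm
      have hmn : m ≤ n := by omega
      rcases eq_or_lt_of_le hmn with heq | hlt
      · -- m = n
        have hpm : p m ≤ p k0 := hmin k0 (by omega) (by omega)
        have h1 : c n ≤ p n := h3 n le_rfl (by omega)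
        rw [heq] at hpm hev
        rw [hck0] at h1 hoddn
        have hcp : p k0 = p n := le_antisymm h1 hpm
        rw [hcp] at hoddn
        rw [Nat.odd_iff] at hoddn; rw [Nat.even_iff] at hev; omega
      · -- m < n
        obtain ⟨hoddm, hlnm⟩ := h4 m hlt (by omega)
        have hprevm : ∀ m', m' < m → ¬(Odd (c m') ∧ l m' = lam - 1) :=
          fun m' hm' => hprev m' (by omega)
        obtain ⟨_, ⟨k1, hk1, hmk1, hck1⟩, h3m, _, _⟩ := inv m hprevm
        have hlm : l m = t := by omega
        have hp1 : p m ≤ p k1 := hmin k1 (by omega) (by omega)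
        have hcm : c m ≤ p m := h3m m le_rfl (by omega)
        rw [hck1] at hoddm hcm
        have hcp : p k1 = p m := le_antisymm hcm hp1
        rw [hcp] at hoddm
        rw [Nat.odd_iff] at hoddm; rw [Nat.even_iff] at hev; omega
  · -- never bad → DFW
    intro hnb j
    have hgood : ∀ n, ∀ m, m < n → ¬(Odd (c m) ∧ l m = lam - 1) := fun _ m _ => hnb m
    have hlj : l j ≤ lam - 1 := ((inv j (hgood j)).1).2
    have key : ∃ i, i ≤ lam - 1 - l j ∧ Even (c (j + i)) := by
      by_contra hcon
      push_neg at hcon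
      have hallodd : ∀ i, i ≤ lam - 1 - l j → Odd (c (j + i)) := by
        intro i hi
        rcases Nat.even_or_odd (c (j + i)) with h | h
        · exact absurd h (hcon i hi)
        · exact h
      have hlstep : ∀ i, i ≤ lam - 1 - l j → l (j + i) = l j + i := by
        intro i
        induction i with
        | zero => intro _; rfl
        | succ i ihi =>
          intro hi
          have hi' : i ≤ lam - 1 - l j := by omega
          have hodd' := hallodd i hi'
          have hlt : l (j + i) < lam - 1 := by rw [ihi hi']; omega
          have hstep := (hodd (j + i) hodd' hlt).1
          have e : j + (i + 1) = j + i + 1 := by omega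
          rw [e, hstep, ihi hi']; omega
      have hbadd : Odd (c (j + (lam - 1 - l j))) := hallodd _ le_rfl
      have hlbad : l (j + (lam - 1 - l j)) = lam - 1 := by
        rw [hlstep _ le_rfl]; omega
      exact hnb _ ⟨hbadd, hlbad⟩
    classical
    obtain ⟨hile, hievn⟩ := Nat.find_spec key
    set i := Nat.find key with hidef
    have hminimal : ∀ i', i' < i → Odd (c (j + i')) := by
      intro i' hi'
      have hni : ¬(i' ≤ lam - 1 - l j ∧ Even (c (j + i'))) := Nat.find_min key hi'
      rcases Nat.even_or_odd (c (j + i')) with h | h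
      · exact absurd ⟨by omega, h⟩ hni
      · exact h
    have hlsteps : ∀ i', i' ≤ i → l (j + i') = l j + i' := by
      intro i'
      induction i' with
      | zero => intro _; rfl
      | succ i' ihi =>
        intro hi'
        have hi'' : i' ≤ i := by omega
        have hodd' := hminimal i' (by omega)
        have hlt : l (j + i') < lam - 1 := by rw [ihi hi'']; omega
        have hstep := (hodd (j + i') hodd' hlt).1
        have e : j + (i' + 1) = j + i' + 1 := by omega
        rw [e, hstep, ihi hi'']; omega
    have hpc : c (j + i) = p (j + i) := (inv (j + i) (hgood _)).2.2.2.2 hievn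
    refine ⟨i, by omega, by rw [← hpc]; exact hievn, ?_⟩
    intro k hk1 hk2
    have h3 := (inv (j + i) (hgood _)).2.2.1
    have hlm : l (j + i) = l j + i := hlsteps i le_rfl
    rw [← hpc]
    exact h3 k (by omega) (by omega)
end
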